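/- Let r, m be real numbers with r ≥ 1, m ≥ 1, and let s be a real number with s ≥ 2rm + 2r. Let M, R₀ be real numbers with 0 < M ≤ R₀ ≤ 1, and set t = (R₀/M)^{1/(s−rm−r)}. Then t^{r(m+1)−s}·R₀ + t^{r(m+1)−m}·M ≤ 2·M^{(s−2rm+m−2r)/(s−rm−r)}. -/

import Mathlib

/-!
With `q = R / M` and `t = q ^ (1 / d)`, the first term is `q⁻¹ R = M` exactly, while the second is
`q ^ (a / d) M ≤ M ^ (1 - a / d)` because `q ≤ M⁻¹`; since `M ≤ 1`, also `M ≤ M ^ (1 - a / d)`.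
For the theorem, `d = s - r m - r` and `a = r (m + 1) - m`.
-/

namespace Real

variable {x M R d a : ℝ}

lemma rpow_one_div_rpow_mul (hx : 0 ≤ x) (hd : d ≠ 0) (c : ℝ) :
    (x ^ (1 / d)) ^ (c * d) = x ^ c := by
  rw [← rpow_mul hx]
  congr 1
  field_simp

lemma div_rpow_one_div_rpow_neg_mul (hM : 0 < M) (hR : 0 < R) (hd : d ≠ 0) :
    ((R / M) ^ (1 / d)) ^ (-d) * R = M := by
  rw [← neg_one_mul d, rpow_one_div_rpow_mul (by positivity) hd, rpow_neg_one]
  field_simp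

lemma div_rpow_one_div_rpow_mul_le (hM : 0 < M) (hR0 : 0 ≤ R) (hR1 : R ≤ 1) (hd : 0 < d)
    (ha : 0 ≤ a) : ((R / M) ^ (1 / d)) ^ a * M ≤ M ^ (1 - a / d) := by
  have hq : R / M ≤ M⁻¹ := by
    rw [div_le_iff₀ hM, inv_mul_cancel₀ hM.ne']
    exact hR1
  calc ((R / M) ^ (1 / d)) ^ a * M
      = (R / M) ^ (a / d) * M := by
        rw [← rpow_one_div_rpow_mul (by positivity) hd.ne' (a / d), div_mul_cancel₀ a hd.ne']
    _ ≤ M⁻¹ ^ (a / d) * M := by gcongr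
    _ = M ^ (1 - a / d) := by
        rw [inv_rpow hM.le, ← rpow_neg hM.le, ← rpow_add_one hM.ne']
        ring_nf

theorem div_rpow_one_div_balance_le (hM : 0 < M) (hMR : M ≤ R) (hR1 : R ≤ 1) (hd : 0 < d)
    (ha : 0 ≤ a) :
    ((R / M) ^ (1 / d)) ^ (-d) * R + ((R / M) ^ (1 / d)) ^ a * M ≤ 2 * M ^ (1 - a / d) := by
  have hM_le : M ≤ M ^ (1 - a / d) := by
    simpa using rpow_le_rpow_of_exponent_ge hM (hMR.trans hR1)
      (sub_le_self 1 (div_nonneg ha hd.le))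
  rw [div_rpow_one_div_rpow_neg_mul hM (hM.trans_le hMR) hd.ne']
  linarith [div_rpow_one_div_rpow_mul_le hM (hM.le.trans hMR) hR1 hd ha]

end Real

/-- Balancing of norms in the Main Estimate: with `t = (R₀/M)^{1/(s−rm−r)}`,
`t^{r(m+1)−s}·R₀ + t^{r(m+1)−m}·M ≤ 2·M^{(s−2rm+m−2r)/(s−rm−r)}`. -/
theorem stmt12 (r m s M R₀ t : ℝ) (hr : 1 ≤ r) (hm : 1 ≤ m)
    (hs : 2 * r * m + 2 * r ≤ s) (hM0 : 0 < M) (hMR : M ≤ R₀) (hR1 : R₀ ≤ 1)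
    (ht : t = (R₀ / M) ^ (1 / (s - r * m - r))) :
    t ^ (r * (m + 1) - s) * R₀ + t ^ (r * (m + 1) - m) * M ≤
      2 * M ^ ((s - 2 * r * m + m - 2 * r) / (s - r * m - r)) := by
  have hd : 0 < s - r * m - r := by nlinarith
  have ha : 0 ≤ r * (m + 1) - m := by nlinarith
  have hfirst : r * (m + 1) - s = -(s - r * m - r) := by ring
  have hexp : (s - 2 * r * m + m - 2 * r) / (s - r * m - r)
      = 1 - (r * (m + 1) - m) / (s - r * m - r) := by
    field_simp
    ring
  rw [ht, hfirst, hexp]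
  exact Real.div_rpow_one_div_balance_le hM0 hMR hR1 hd ha
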